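/- In a PS4 model, if xSy, then for every formula φ, if v(φ,x) ∈ {1,0} then v(φ,y) = v(φ,x). (Truth and falsity are preserved along S.) -/
import Mathlib


inductive Fm where
  | atom : ℕ → Fm
  | neg : Fm → Fm
  | and : Fm → Fm → Fm
  | or : Fm → Fm → Fm
  | box : Fm → Fm
deriving DecidableEq

def skAnd : Option Bool → Option Bool → Option Bool
  | some false, _ => some false
  | _, some false => some false
  | some true, some true => some true
  | _, _ => none

def skOr : Option Bool → Option Bool → Option Bool
  | some true, _ => some true
  | _, some true => some true
  | some false, some false => some false
  | _, _ => none

open Classical in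
/-- Three-valued Strong Kleene evaluation (`some true` = 1, `some false` = 0, `none` = *). -/
noncomputable def Eval {W : Type} (R : W → W → Prop) (v : W → ℕ → Option Bool) :
    Fm → W → Option Bool
  | .atom n, x => v x n
  | .neg φ, x => (Eval R v φ x).map (!·)
  | .and φ ψ, x => skAnd (Eval R v φ x) (Eval R v ψ x)
  | .or φ ψ, x => skOr (Eval R v φ x) (Eval R v ψ x)
  | .box φ, x =>
      if ∀ y, R x y → Eval R v φ y = some true then some true
      else if ∃ y, R x y ∧ Eval R v φ y = some false then some false
      else none

/-- In a PS4 model, if xSy then every formula with a classical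
value (1 or 0) at x has the same value at y. -/
theorem ps4_S_preserves_values :
    ∀ (W : Type) (R S : W → W → Prop) (v : W → ℕ → Option Bool),
      (∀ x, S x x) →                                            -- S reflexive
      (∀ x, R x x) →                                            -- R reflexive
      (∀ x y z, R x y → R y z → ∃ w, R x w ∧ S z w) →           -- Pseudo-Transitivity
      (∀ x y z, R x y → S x z → ∃ w, R z w ∧ S y w) →           -- Forth
      (∀ x z w, S x z → R z w → ∃ y, R x y ∧ S y w) →           -- Back
      (∀ x y, S x y → ∀ n, (v x n).isSome → v y n = v x n) →    -- S information preservation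
      ∀ x y, S x y → ∀ φ : Fm, (Eval R v φ x).isSome → Eval R v φ y = Eval R v φ x := by
  intro W R S v _Srefl _Rrefl _pt forth back pres x y hS φ
  induction φ generalizing x y hS with
  | atom n =>
    intro h
    exact pres x y hS n h
  | neg φ ih =>
    intro h
    simp only [Eval] at h ⊢
    rcases hφ : Eval R v φ x with _ | b
    · simp [hφ] at h
    · rw [ih x y hS (by simp [hφ]), hφ]
  | and φ ψ ihφ ihψ =>
    intro h
    simp only [Eval] at h ⊢
    rcases hφ : Eval R v φ x with _ | bφ <;> rcases hψ : Eval R v ψ x with _ | bψ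
    · simp [hφ, hψ, skAnd] at h
    · cases bψ
      · rw [ihψ x y hS (by simp [hψ]), hψ]
        rcases Eval R v φ y with _ | b
        · rfl
        · cases b <;> rfl
      · simp [hφ, hψ, skAnd] at h
    · cases bφ
      · rw [ihφ x y hS (by simp [hφ]), hφ]
        rcases Eval R v ψ y with _ | b
        · rfl
        · cases b <;> rfl
      · simp [hφ, hψ, skAnd] at h
    · rw [ihφ x y hS (by simp [hφ]), ihψ x y hS (by simp [hψ]), hφ, hψ]
  | or φ ψ ihφ ihψ =>
    intro h
    simp only [Eval] at h ⊢
    rcases hφ : Eval R v φ x with _ | bφ <;> rcases hψ : Eval R v ψ x with _ | bψ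
    · simp [hφ, hψ, skOr] at h
    · cases bψ
      · simp [hφ, hψ, skOr] at h
      · rw [ihψ x y hS (by simp [hψ]), hψ]
        rcases Eval R v φ y with _ | b
        · rfl
        · cases b <;> rfl
    · cases bφ
      · simp [hφ, hψ, skOr] at h
      · rw [ihφ x y hS (by simp [hφ]), hφ]
        rcases Eval R v ψ y with _ | b
        · rfl
        · cases b <;> rfl
    · rw [ihφ x y hS (by simp [hφ]), ihψ x y hS (by simp [hψ]), hφ, hψ]
  | box φ ih =>
    intro h
    simp only [Eval] at h ⊢
    by_cases h1 : ∀ z, R x z → Eval R v φ z = some true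
    · have hy : ∀ w, R y w → Eval R v φ w = some true := by
        intro w hRyw
        obtain ⟨u, hRxu, hSuw⟩ := back x y w hS hRyw
        have := h1 u hRxu
        rw [ih u w hSuw (by simp [this]), this]
      rw [if_pos hy, if_pos h1]
    · by_cases h2 : ∃ z, R x z ∧ Eval R v φ z = some false
      · obtain ⟨z, hRxz, hz⟩ := h2
        obtain ⟨w, hRyw, hSzw⟩ := forth x z y hRxz hS
        have hw : Eval R v φ w = some false := by
          rw [ih z w hSzw (by simp [hz]), hz]
        have hy1 : ¬ ∀ u, R y u → Eval R v φ u = some true := by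
          intro hall
          have := hall w hRyw
          simp [hw] at this
        rw [if_neg hy1, if_pos ⟨w, hRyw, hw⟩, if_neg h1, if_pos ⟨z, hRxz, hz⟩]
      · rw [if_neg h1, if_neg h2] at h
        simp at h
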